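/- Let N ≥ 3 be odd and let Γ = {−(N−1)/2, …, (N−1)/2}² ⊂ ℤ² be the centered N×N square domain. The function H(x,y) = x·y is harmonic on all of ℤ²; the greatest common divisor of its values {u·v : (u,v) ∈ Γ} equals 1; and (N+1)/2 divides u·v for every (u,v) ∈ ∂(ℤ² \ Γ). -/

import Mathlib

/-- Two vertices of `ℤ²` are adjacent iff their Euclidean distance is `1`. -/
def adj (u v : ℤ × ℤ) : Prop := (u.1 - v.1) ^ 2 + (u.2 - v.2) ^ 2 = 1

theorem Finset.gcd_eq_one_of_isUnit {ι α : Type*} [CommMonoidWithZero α]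
    [NormalizedGCDMonoid α] {s : Finset ι} {f : ι → α} {i : ι} (hi : i ∈ s) (hf : IsUnit (f i)) :
    s.gcd f = 1 := by
  rw [← Finset.normalize_gcd, normalize_eq_one]
  exact isUnit_of_dvd_unit (Finset.gcd_dvd hi) hf

theorem Int.sq_add_sq_eq_one_iff {a b : ℤ} :
    a ^ 2 + b ^ 2 = 1 ↔ (a = 1 ∨ a = -1) ∧ b = 0 ∨ a = 0 ∧ (b = 1 ∨ b = -1) := by
  constructor
  · intro h
    have ha : |a| ≤ 1 := sq_le_one_iff_abs_le_one a |>.mp (by nlinarith [sq_nonneg b])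
    have hb : |b| ≤ 1 := sq_le_one_iff_abs_le_one b |>.mp (by nlinarith [sq_nonneg a])
    rw [abs_le] at ha hb
    obtain ⟨ha₁, ha₂⟩ := ha
    obtain ⟨hb₁, hb₂⟩ := hb
    interval_cases a <;> interval_cases b <;> simp_all
  · rintro (⟨ha | ha, hb⟩ | ⟨ha, hb | hb⟩) <;> subst ha hb <;> norm_num

theorem adj_iff {w v : ℤ × ℤ} :
    adj w v ↔ w = (v.1 + 1, v.2) ∨ w = (v.1 - 1, v.2) ∨ w = (v.1, v.2 + 1) ∨ w = (v.1, v.2 - 1) := by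
  obtain ⟨x, y⟩ := w
  rw [adj, Int.sq_add_sq_eq_one_iff]
  simp only [Prod.mk.injEq]
  omega

theorem finsum_mem_adj {M : Type*} [AddCommMonoid M] (f : ℤ × ℤ → M) (v : ℤ × ℤ) :
    ∑ᶠ w ∈ {w | adj w v}, f w =
      f (v.1 + 1, v.2) + f (v.1 - 1, v.2) + f (v.1, v.2 + 1) + f (v.1, v.2 - 1) := by
  have hneighbours : {w | adj w v} =
      ↑({(v.1 + 1, v.2), (v.1 - 1, v.2), (v.1, v.2 + 1), (v.1, v.2 - 1)} : Finset (ℤ × ℤ)) := by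
    ext w
    simp [adj_iff]
  rw [hneighbours, finsum_mem_coe_finset, Finset.sum_insert, Finset.sum_insert, Finset.sum_insert,
    Finset.sum_singleton, add_assoc, add_assoc]
  all_goals simp only [Finset.mem_insert, Finset.mem_singleton, Prod.ext_iff]; omega

theorem finsum_mem_adj_mul (v : ℤ × ℤ) :
    ∑ᶠ w ∈ {w | adj w v}, w.1 * w.2 = 4 * (v.1 * v.2) := by
  rw [finsum_mem_adj]
  ring

noncomputable def centeredSquare (k : ℤ) : Finset (ℤ × ℤ) := Finset.Icc (-k) k ×ˢ Finset.Icc (-k) k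

theorem abs_eq_succ_of_adj_centeredSquare {k : ℤ} {v w : ℤ × ℤ} (hv : v ∈ centeredSquare k)
    (hw : w ∉ centeredSquare k) (hvw : adj w v) : |w.1| = k + 1 ∨ |w.2| = k + 1 := by
  simp only [centeredSquare, Finset.mem_product, Finset.mem_Icc] at hv hw
  rw [abs_eq (by omega), abs_eq (by omega)]
  rcases adj_iff.mp hvw with rfl | rfl | rfl | rfl <;> simp only at hw ⊢ <;> omega

theorem succ_dvd_mul_of_adj_centeredSquare {k : ℤ} {v w : ℤ × ℤ} (hv : v ∈ centeredSquare k)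
    (hw : w ∉ centeredSquare k) (hvw : adj w v) : k + 1 ∣ w.1 * w.2 := by
  rcases abs_eq_succ_of_adj_centeredSquare hv hw hvw with h | h
  · exact h ▸ (abs_dvd_self w.1).mul_right w.2
  · exact h ▸ (abs_dvd_self w.2).mul_left w.1

theorem xy_harmonic_coprime_divisible_general (N : ℕ) (hN : 3 ≤ N) :
    (∀ v : ℤ × ℤ, (∑ᶠ w ∈ {w : ℤ × ℤ | adj w v}, w.1 * w.2) = 4 * (v.1 * v.2)) ∧
    Finset.gcd
      (Finset.Icc (-(((N : ℤ) - 1) / 2)) (((N : ℤ) - 1) / 2) ×ˢ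
        Finset.Icc (-(((N : ℤ) - 1) / 2)) (((N : ℤ) - 1) / 2))
      (fun v : ℤ × ℤ => v.1 * v.2) = 1 ∧
    ∀ w : ℤ × ℤ,
      w ∉ (Finset.Icc (-(((N : ℤ) - 1) / 2)) (((N : ℤ) - 1) / 2) ×ˢ
        Finset.Icc (-(((N : ℤ) - 1) / 2)) (((N : ℤ) - 1) / 2)) →
      (∃ v ∈ (Finset.Icc (-(((N : ℤ) - 1) / 2)) (((N : ℤ) - 1) / 2) ×ˢ
        Finset.Icc (-(((N : ℤ) - 1) / 2)) (((N : ℤ) - 1) / 2)), adj w v) →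
      ((N : ℤ) + 1) / 2 ∣ w.1 * w.2 := by
  have hone : ((1, 1) : ℤ × ℤ) ∈ centeredSquare (((N : ℤ) - 1) / 2) := by
    simp only [centeredSquare, Finset.mem_product, Finset.mem_Icc]
    omega
  have hhalf : ((N : ℤ) + 1) / 2 = ((N : ℤ) - 1) / 2 + 1 := by omega
  refine ⟨finsum_mem_adj_mul, Finset.gcd_eq_one_of_isUnit hone (by simp), ?_⟩
  rintro w hw ⟨v, hv, hvw⟩
  exact hhalf ▸ succ_dvd_mul_of_adj_centeredSquare hv hw hvw

/-- Let `N ≥ 3` be odd and `Γ = {−(N−1)/2, …, (N−1)/2}²` the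
centered `N×N` square domain. Then `H(x,y) = x·y` is harmonic on all of `ℤ²`,
the gcd of its values on `Γ` is `1`, and `(N+1)/2` divides `u·v` for every
`(u,v) ∈ ∂(ℤ² \ Γ)`. -/
theorem xy_harmonic_coprime_divisible (N : ℕ) (hodd : Odd N) (hN : 3 ≤ N) :
    (∀ v : ℤ × ℤ, (∑ᶠ w ∈ {w : ℤ × ℤ | adj w v}, w.1 * w.2) = 4 * (v.1 * v.2)) ∧
    Finset.gcd
      (Finset.Icc (-(((N : ℤ) - 1) / 2)) (((N : ℤ) - 1) / 2) ×ˢ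
        Finset.Icc (-(((N : ℤ) - 1) / 2)) (((N : ℤ) - 1) / 2))
      (fun v : ℤ × ℤ => v.1 * v.2) = 1 ∧
    ∀ w : ℤ × ℤ,
      w ∉ (Finset.Icc (-(((N : ℤ) - 1) / 2)) (((N : ℤ) - 1) / 2) ×ˢ
        Finset.Icc (-(((N : ℤ) - 1) / 2)) (((N : ℤ) - 1) / 2)) →
      (∃ v ∈ (Finset.Icc (-(((N : ℤ) - 1) / 2)) (((N : ℤ) - 1) / 2) ×ˢ
        Finset.Icc (-(((N : ℤ) - 1) / 2)) (((N : ℤ) - 1) / 2)), adj w v) →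
      ((N : ℤ) + 1) / 2 ∣ w.1 * w.2 :=
  xy_harmonic_coprime_divisible_general N hN
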